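/- arXiv:1601.04960 — 5 statements merged into one kernel-verified Lean document; each statement's English description precedes it below -/
import Mathlib

section
/- Let r ≥ 1, let Θ be an r×r complex Hermitian positive semidefinite matrix, and let w be any r×r complex matrix. Then the real number tr(Θ·(w·wᴴ − wᴴ·w)) satisfies tr(Θ·(w·wᴴ − wᴴ·w)) ≥ 2(1−r)·‖w‖_F²·tr(Θ). (This is the key estimate tr(Θ[w,w*]) ≥ 2(1−r)|w|² tr Θ in the proof that the form Ω_{α,β} on the parameter space Z is positive.) -/
/-!
Since `Θ ≥ 0` and `w wᴴ ≥ 0`, the term `tr(Θ w wᴴ)` is nonnegative. Every eigenvalue of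
`wᴴ w ≥ 0` is at most their sum `tr(wᴴ w)`, so `wᴴ w ≤ tr(wᴴ w) • 1` and hence
`tr(Θ wᴴ w) ≤ tr(wᴴ w) tr Θ`. Together, `tr(Θ [w, wᴴ]) ≥ -tr(wᴴ w) tr Θ`, which is at least
`2(1 - r) tr(wᴴ w) tr Θ` once `r ≥ 2`; for `r ≤ 1` all matrices commute.
-/

open Matrix
open scoped ComplexOrder

namespace Matrix

variable {n 𝕜 : Type*} [Fintype n] [RCLike 𝕜]

theorem commute_of_subsingleton [Subsingleton n] {R : Type*} [CommSemiring R]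
    (A B : Matrix n n R) : Commute A B := by
  ext i j
  simp [mul_apply, Subsingleton.elim _ j, mul_comm]

theorem PosSemidef.trace_mul_nonneg {A B : Matrix n n 𝕜} (hA : A.PosSemidef)
    (hB : B.PosSemidef) : 0 ≤ (A * B).trace := by
  classical
  open scoped MatrixOrder in
  obtain ⟨X, rfl⟩ := CStarAlgebra.nonneg_iff_eq_star_mul_self.mp hA.nonneg
  rw [star_eq_conjTranspose, Matrix.mul_assoc, trace_mul_comm]
  exact (hB.mul_mul_conjTranspose_same X).trace_nonneg

open scoped MatrixOrder in
theorem PosSemidef.trace_smul_one_sub [DecidableEq n] {A : Matrix n n 𝕜} (hA : A.PosSemidef) :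
    (A.trace • 1 - A).PosSemidef := by
  have le_sum_eigenvalues : A ≤ algebraMap ℝ _ (∑ i, hA.isHermitian.eigenvalues i) := by
    rw [le_algebraMap_iff_spectrum_le hA.isHermitian.isSelfAdjoint,
      hA.isHermitian.spectrum_real_eq_range_eigenvalues]
    rintro _ ⟨i, rfl⟩
    exact Finset.single_le_sum (fun j _ => hA.eigenvalues_nonneg j) (Finset.mem_univ i)
  rwa [Matrix.le_iff, Algebra.algebraMap_eq_smul_one, ← algebraMap_smul 𝕜,
    RCLike.algebraMap_eq_ofReal, RCLike.ofReal_sum,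
    ← hA.isHermitian.trace_eq_sum_eigenvalues] at le_sum_eigenvalues

theorem PosSemidef.trace_mul_conjTranspose_mul_self_le {Θ : Matrix n n 𝕜} (hΘ : Θ.PosSemidef)
    (w : Matrix n n 𝕜) : (Θ * (wᴴ * w)).trace ≤ (wᴴ * w).trace * Θ.trace := by
  classical
  have h := hΘ.trace_mul_nonneg (posSemidef_conjTranspose_mul_self w).trace_smul_one_sub
  rwa [Matrix.mul_sub, trace_sub, Matrix.mul_smul, Matrix.mul_one, trace_smul, smul_eq_mul,
    sub_nonneg] at h

theorem PosSemidef.neg_trace_mul_trace_le_trace_mul_selfCommutator {Θ : Matrix n n 𝕜}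
    (hΘ : Θ.PosSemidef) (w : Matrix n n 𝕜) :
    -((wᴴ * w).trace * Θ.trace) ≤ (Θ * (w * wᴴ - wᴴ * w)).trace := by
  rw [Matrix.mul_sub, trace_sub, neg_eq_zero_sub]
  exact sub_le_sub (hΘ.trace_mul_nonneg (posSemidef_self_mul_conjTranspose w))
    (hΘ.trace_mul_conjTranspose_mul_self_le w)

end Matrix

theorem trace_posSemidef_selfCommutator_lower_bound_general
    (r : ℕ) (Θ w : Matrix (Fin r) (Fin r) ℂ)
    (hΘpsd : Θ.PosSemidef) :
    ((2 * (1 - (r : ℝ)) * ((wᴴ * w).trace.re) : ℝ) : ℂ) * Θ.trace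
      ≤ (Θ * (w * wᴴ - wᴴ * w)).trace := by
  rcases Nat.lt_or_ge r 2 with hr | hr
  · interval_cases r
    · simp
    · simp [(commute_of_subsingleton w wᴴ).eq]
  obtain ⟨c, hc, hwc⟩ : ∃ c : ℝ, 0 ≤ c ∧ (c : ℂ) = (wᴴ * w).trace :=
    RCLike.nonneg_iff_exists_ofReal.mp (posSemidef_conjTranspose_mul_self w).trace_nonneg
  obtain ⟨t, ht, hΘt⟩ : ∃ t : ℝ, 0 ≤ t ∧ (t : ℂ) = Θ.trace :=
    RCLike.nonneg_iff_exists_ofReal.mp hΘpsd.trace_nonneg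
  have hr' : (2 : ℝ) ≤ r := by exact_mod_cast hr
  rw [← hwc, ← hΘt, Complex.ofReal_re]
  calc ((2 * (1 - (r : ℝ)) * c : ℝ) : ℂ) * t ≤ -(c * t) := by
        exact_mod_cast (by nlinarith [mul_nonneg hc ht] : 2 * (1 - (r : ℝ)) * c * t ≤ -(c * t))
    _ = -((wᴴ * w).trace * Θ.trace) := by rw [hwc, hΘt]
    _ ≤ (Θ * (w * wᴴ - wᴴ * w)).trace :=
        hΘpsd.neg_trace_mul_trace_le_trace_mul_selfCommutator w

/-- For `r ≥ 1`, a Hermitian positive semidefinite `r × r` complex matrix `Θ` and any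
`r × r` complex matrix `w`, one has `tr(Θ·(w wᴴ − wᴴ w)) ≥ 2(1−r)·‖w‖_F²·tr(Θ)`,
where `‖w‖_F² = tr(wᴴ w)` is the squared Frobenius norm.  (The inequality is between
complex numbers that are in fact real, using the partial order on `ℂ`.) -/
theorem trace_posSemidef_selfCommutator_lower_bound
    (r : ℕ) (hr : 1 ≤ r) (Θ w : Matrix (Fin r) (Fin r) ℂ)
    (hΘ : Θ.IsHermitian) (hΘpsd : Θ.PosSemidef) :
    ((2 * (1 - (r : ℝ)) * ((wᴴ * w).trace.re) : ℝ) : ℂ) * Θ.trace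
      ≤ (Θ * (w * wᴴ - wᴴ * w)).trace :=
  trace_posSemidef_selfCommutator_lower_bound_general r Θ w hΘpsd
end

section
/- Let r ≥ 2, let α > 0 and 0 < β < 2/(r−1) be real numbers, let Θ be an r×r complex Hermitian positive semidefinite matrix with tr(Θ) > 0, and let w be any r×r complex matrix. Then tr(Θ) + (α·β / (4·(1 + α·‖w‖_F²)))·tr(Θ·(w·wᴴ − wᴴ·w)) > 0. (This is the pointwise inequality establishing positivity of the closed (1,1)-form Ω_{α,β} = π*Ω^{Map} + (β/4)dd^cΓ(·,α) on the parameter space Z, as in Proposition 2.2: here Θ plays the role of the curvature term iF_V(ρ_h, ρ̄_h) of the pulled-back universal quotient bundle, whose trace is the Fubini–Study form evaluated on the horizontal vector, and w plays the role of the value of the Higgs field at a point.) -/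
/-!
A positive semidefinite `Θ` satisfies `Θ ≤ tr(Θ)·1` (its eigenvalues are nonnegative and sum to
`tr Θ`), so `tr(Θ wᴴw) = tr(w Θ wᴴ) ≤ tr(Θ)‖w‖²`, while `tr(Θ wwᴴ) = tr(wᴴ Θ w) ≥ 0`. With
`c = αβ/(4(1 + α‖w‖²))` the left-hand side is therefore at least `tr(Θ)(1 - c‖w‖²)`, and
`c‖w‖² < β/4 < 1`.
-/

open Matrix
open scoped ComplexOrder

namespace Matrix

variable {𝕜 m n : Type*} [RCLike 𝕜] [Fintype m] [Fintype n]

open scoped MatrixOrder in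
theorem PosSemidef.le_trace_smul_one [DecidableEq n] {A : Matrix n n 𝕜} (hA : A.PosSemidef) :
    A ≤ A.trace • 1 := by
  have hA' := hA.isHermitian
  have htr : A.trace = ((∑ i, hA'.eigenvalues i : ℝ) : 𝕜) := by
    simp [hA'.trace_eq_sum_eigenvalues]
  rw [htr, ← RCLike.real_smul_eq_coe_smul, ← Algebra.algebraMap_eq_smul_one]
  refine le_algebraMap_of_spectrum_le (fun x hx => ?_) hA'.isSelfAdjoint
  obtain ⟨i, rfl⟩ : x ∈ Set.range hA'.eigenvalues := hA'.spectrum_real_eq_range_eigenvalues ▸ hx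
  exact Finset.single_le_sum (fun j _ => hA.eigenvalues_nonneg j) (Finset.mem_univ i)

theorem PosSemidef.trace_mul_mul_conjTranspose_nonneg {A : Matrix n n 𝕜} (hA : A.PosSemidef)
    (B : Matrix n m 𝕜) : 0 ≤ (A * (B * Bᴴ)).trace := by
  rw [← Matrix.mul_assoc, trace_mul_cycle]
  exact (hA.conjTranspose_mul_mul_same B).trace_nonneg

theorem PosSemidef.trace_mul_conjTranspose_mul_le [DecidableEq n] {A : Matrix n n 𝕜}
    (hA : A.PosSemidef) (B : Matrix m n 𝕜) :
    (A * (Bᴴ * B)).trace ≤ A.trace * (Bᴴ * B).trace := by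
  open scoped MatrixOrder in
  have h := (Matrix.le_iff.mp hA.le_trace_smul_one).mul_mul_conjTranspose_same B
  rw [Matrix.mul_sub, Matrix.sub_mul, Matrix.mul_smul, Matrix.smul_mul, Matrix.mul_one] at h
  have htr := h.trace_nonneg
  rw [trace_sub, trace_smul, sub_nonneg, smul_eq_mul, trace_mul_comm B] at htr
  rwa [← Matrix.mul_assoc, trace_mul_comm, ← Matrix.mul_assoc]

end Matrix

theorem pointwise_positivity_Omega_alpha_beta_general
    (r : ℕ) (hr : 2 ≤ r) (α β : ℝ) (hα : 0 < α) (hβ : 0 < β)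
    (hβ' : β < 2 / ((r : ℝ) - 1))
    (Θ w : Matrix (Fin r) (Fin r) ℂ)
    (hΘpsd : Θ.PosSemidef) (hΘtr : 0 < Θ.trace) :
    0 < Θ.trace
        + ((α * β / (4 * (1 + α * ((wᴴ * w).trace.re))) : ℝ) : ℂ)
          * (Θ * (w * wᴴ - wᴴ * w)).trace := by
  set N := (wᴴ * w).trace
  set c : ℝ := α * β / (4 * (1 + α * N.re))
  have hN : 0 ≤ N := (posSemidef_conjTranspose_mul_self w).trace_nonneg
  have hNre : N = N.re := Complex.eq_re_of_ofReal_le (by rwa [Complex.ofReal_zero])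
  have hαN : 0 ≤ α * N.re := mul_nonneg hα.le (Complex.nonneg_iff.mp hN).1
  have hD : 0 < 4 * (1 + α * N.re) := by linarith
  have hβ2 : β < 2 := hβ'.trans_le <| div_le_self zero_le_two <| by
    have : (2 : ℝ) ≤ r := by exact_mod_cast hr
    linarith
  have hcN : c * N.re < 1 := by
    rw [div_mul_eq_mul_div, div_lt_one hD]
    nlinarith [mul_nonneg hαN (by linarith : 0 ≤ 4 - β)]
  have hc : (0 : ℂ) ≤ c := by exact_mod_cast div_nonneg (mul_nonneg hα.le hβ.le) hD.le
  calc 0 < Θ.trace * (1 - c * N) := by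
        refine mul_pos hΘtr ?_
        rw [hNre]
        exact_mod_cast sub_pos.mpr hcN
    _ = Θ.trace - c * (Θ.trace * N) := by ring
    _ ≤ Θ.trace - c * (Θ * (wᴴ * w)).trace :=
        sub_le_sub_left (mul_le_mul_of_nonneg_left (hΘpsd.trace_mul_conjTranspose_mul_le w) hc) _
    _ ≤ Θ.trace + c * (Θ * (w * wᴴ - wᴴ * w)).trace := by
        rw [Matrix.mul_sub, trace_sub, mul_sub, add_sub]
        exact sub_le_sub_right
          (le_add_of_nonneg_right (mul_nonneg hc (hΘpsd.trace_mul_mul_conjTranspose_nonneg w))) _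

/-- For `r ≥ 2`, real parameters `α > 0` and `0 < β < 2/(r−1)`, a Hermitian positive
semidefinite `r × r` complex matrix `Θ` with `tr Θ > 0`, and any `r × r` complex matrix
`w`, one has `tr(Θ) + (αβ / (4(1 + α‖w‖_F²)))·tr(Θ·(w wᴴ − wᴴ w)) > 0`, where
`‖w‖_F² = tr(wᴴ w)` is the squared Frobenius norm.  (The inequality is between complex
numbers that are in fact real, using the partial order on `ℂ`.) -/
theorem pointwise_positivity_Omega_alpha_beta
    (r : ℕ) (hr : 2 ≤ r) (α β : ℝ) (hα : 0 < α) (hβ : 0 < β)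
    (hβ' : β < 2 / ((r : ℝ) - 1))
    (Θ w : Matrix (Fin r) (Fin r) ℂ)
    (hΘ : Θ.IsHermitian) (hΘpsd : Θ.PosSemidef) (hΘtr : 0 < Θ.trace) :
    0 < Θ.trace
        + ((α * β / (4 * (1 + α * ((wᴴ * w).trace.re))) : ℝ) : ℂ)
          * (Θ * (w * wᴴ - wᴴ * w)).trace :=
  pointwise_positivity_Omega_alpha_beta_general r hr α β hα hβ hβ' Θ w hΘpsd hΘtr
end

section
/- Let E be a finite-dimensional complex inner product space, let φ : E → E be a linear map with adjoint φ*, and let P : E → E be an orthogonal projection (P² = P and P* = P). Then tr(P ∘ (φ∘φ* − φ*∘φ)) = ‖P∘φ∘(id−P)‖_{HS}² − ‖(id−P)∘φ∘P‖_{HS}², where ‖·‖_{HS} denotes the Hilbert–Schmidt norm. (This is the linear-algebra identity underlying the computation of the term tr(π_F Λ[φ,φ*]) in the proof of Theorem B relating balanced metrics to Gieseker stability.) -/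
open LinearMap in
private lemma trace_adjoint_eq_star
    {E : Type*} [NormedAddCommGroup E] [InnerProductSpace ℂ E] [FiniteDimensional ℂ E]
    (f : E →ₗ[ℂ] E) :
    LinearMap.trace ℂ E (LinearMap.adjoint f) = star (LinearMap.trace ℂ E f) := by
  let b := stdOrthonormalBasis ℂ E
  rw [LinearMap.trace_eq_matrix_trace ℂ b.toBasis, LinearMap.trace_eq_matrix_trace ℂ b.toBasis,
    LinearMap.toMatrix_adjoint, Matrix.trace_conjTranspose]

open LinearMap in
private lemma trace_star_mul_self_real
    {E : Type*} [NormedAddCommGroup E] [InnerProductSpace ℂ E] [FiniteDimensional ℂ E]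
    (g : E →ₗ[ℂ] E) :
    ((LinearMap.trace ℂ E (LinearMap.adjoint g * g)).re : ℂ)
      = LinearMap.trace ℂ E (LinearMap.adjoint g * g) := by
  have h : star (LinearMap.trace ℂ E (LinearMap.adjoint g * g))
      = LinearMap.trace ℂ E (LinearMap.adjoint g * g) := by
    rw [← trace_adjoint_eq_star]
    congr 1
    rw [← LinearMap.star_eq_adjoint, star_mul, LinearMap.star_eq_adjoint,
      LinearMap.star_eq_adjoint, LinearMap.adjoint_adjoint]
  exact Complex.conj_eq_iff_re.mp h

/-- Let `E` be a finite-dimensional complex inner product space, `φ : E → E` a linear map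
with adjoint `φ*`, and `P : E → E` an orthogonal projection (`P² = P`, `P* = P`).  Then
`tr(P ∘ (φφ* − φ*φ)) = ‖P φ (1−P)‖_HS² − ‖(1−P) φ P‖_HS²`, where
`‖T‖_HS² = tr(T* ∘ T)` (a nonnegative real number). -/
theorem trace_proj_selfCommutator
    {E : Type*} [NormedAddCommGroup E] [InnerProductSpace ℂ E] [FiniteDimensional ℂ E]
    (φ P : E →ₗ[ℂ] E) (hP2 : P * P = P) (hPadj : LinearMap.adjoint P = P) :
    LinearMap.trace ℂ E
        (P * (φ * LinearMap.adjoint φ - LinearMap.adjoint φ * φ))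
      = ((((LinearMap.trace ℂ E
              (LinearMap.adjoint (P * φ * (1 - P)) * (P * φ * (1 - P)))).re
          - (LinearMap.trace ℂ E
              (LinearMap.adjoint ((1 - P) * φ * P) * ((1 - P) * φ * P))).re : ℝ)) : ℂ) := by
  set ψ := LinearMap.adjoint φ with hψ
  set t := LinearMap.trace ℂ E with ht
  have hQ2 : (1 - P) * (1 - P) = 1 - P := by
    simp [mul_sub, sub_mul, hP2]
  have hQadj : LinearMap.adjoint (1 - P) = 1 - P := by
    rw [← LinearMap.star_eq_adjoint, star_sub, star_one, LinearMap.star_eq_adjoint, hPadj]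
  have hAadj : LinearMap.adjoint (P * φ * (1 - P)) = (1 - P) * ψ * P := by
    rw [← LinearMap.star_eq_adjoint, star_mul, star_mul]
    simp only [LinearMap.star_eq_adjoint, hPadj, hQadj, ← hψ, mul_assoc]
  have hBadj : LinearMap.adjoint ((1 - P) * φ * P) = P * ψ * (1 - P) := by
    rw [← LinearMap.star_eq_adjoint, star_mul, star_mul]
    simp only [LinearMap.star_eq_adjoint, hPadj, hQadj, ← hψ, mul_assoc]
  -- compute the two Hilbert–Schmidt traces
  have hX : t (LinearMap.adjoint (P * φ * (1 - P)) * (P * φ * (1 - P)))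
      = t (ψ * P * φ) - t (P * ψ * P * φ) := by
    rw [hAadj]
    have e1 : (1 - P) * ψ * P * (P * φ * (1 - P)) = (1 - P) * ψ * P * φ * (1 - P) := by
      have : (1 - P) * ψ * (P * P) * φ * (1 - P) = (1 - P) * ψ * P * φ * (1 - P) := by
        rw [hP2]
      simpa [mul_assoc] using this
    rw [e1, LinearMap.trace_mul_comm]
    have e2 : (1 - P) * ((1 - P) * ψ * P * φ) = (1 - P) * ψ * P * φ := by
      have : ((1 - P) * (1 - P)) * ψ * P * φ = (1 - P) * ψ * P * φ := by rw [hQ2]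
      simpa [mul_assoc] using this
    rw [e2]
    have e3 : (1 - P) * ψ * P * φ = ψ * P * φ - P * ψ * P * φ := by
      simp [sub_mul]
    rw [e3, map_sub]
  have hY : t (LinearMap.adjoint ((1 - P) * φ * P) * ((1 - P) * φ * P))
      = t (P * ψ * φ) - t (P * ψ * P * φ) := by
    rw [hBadj]
    have e1 : P * ψ * (1 - P) * ((1 - P) * φ * P) = P * ψ * (1 - P) * φ * P := by
      have : P * ψ * ((1 - P) * (1 - P)) * φ * P = P * ψ * (1 - P) * φ * P := by rw [hQ2]
      simpa [mul_assoc] using this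
    rw [e1, LinearMap.trace_mul_comm]
    have e2 : P * (P * ψ * (1 - P) * φ) = P * ψ * (1 - P) * φ := by
      have : (P * P) * ψ * (1 - P) * φ = P * ψ * (1 - P) * φ := by rw [hP2]
      simpa [mul_assoc] using this
    rw [e2]
    have e3 : P * ψ * (1 - P) * φ = P * ψ * φ - P * ψ * P * φ := by
      simp [mul_sub, sub_mul, mul_assoc]
    rw [e3, map_sub]
  rw [Complex.ofReal_sub, trace_star_mul_self_real, trace_star_mul_self_real, hX, hY,
    mul_sub, map_sub]
  have h5 : t (ψ * P * φ) = t (P * (φ * ψ)) := by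
    rw [mul_assoc, LinearMap.trace_mul_comm, mul_assoc]
  have h6 : t (P * (ψ * φ)) = t (P * ψ * φ) := by rw [mul_assoc]
  rw [h5, h6]
  ring
end

section
/- Let E be a finite-dimensional complex inner product space, let φ : E → E be a linear map with adjoint φ*, and let P : E → E be an orthogonal projection such that (id−P)∘φ∘P = 0 (i.e. the range of P is invariant under φ). Then tr(P ∘ (φ∘φ* − φ*∘φ)) = ‖P∘φ∘(id−P)‖_{HS}² ; in particular this trace is a nonnegative real number, and it vanishes if and only if P∘φ∘(id−P) = 0, i.e. if and only if φ preserves the orthogonal decomposition E = range(P) ⊕ range(P)^⊥. (This is the identity tr(π_F Λ[φ,φ*]) = |π_F φ(Id−π_F)|² used in the proof of Theorem B, applied to the orthogonal projection π_F onto a φ-invariant subsheaf F ⊂ E; the vanishing case corresponds to the splitting of the Higgs field.) -/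
open scoped ComplexOrder

private lemma trace_adjoint_mul_self_aux
    {E : Type*} [NormedAddCommGroup E] [InnerProductSpace ℂ E] [FiniteDimensional ℂ E]
    (T : E →ₗ[ℂ] E) :
    LinearMap.trace ℂ E (LinearMap.adjoint T * T)
      = ((∑ i, ‖T (stdOrthonormalBasis ℂ E i)‖ ^ 2 : ℝ) : ℂ) := by
  set b := stdOrthonormalBasis ℂ E
  rw [LinearMap.trace_eq_matrix_trace ℂ b.toBasis, Matrix.trace]
  push_cast
  refine Finset.sum_congr rfl fun i _ => ?_
  rw [Matrix.diag_apply, LinearMap.toMatrix_apply, OrthonormalBasis.coe_toBasis,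
    OrthonormalBasis.coe_toBasis_repr_apply, OrthonormalBasis.repr_apply_apply,
    Module.End.mul_apply, LinearMap.adjoint_inner_right,
    inner_self_eq_norm_sq_to_K]
  norm_cast

/-- Let `E` be a finite-dimensional complex inner product space, `φ : E → E` a linear map
with adjoint `φ*`, and `P : E → E` an orthogonal projection (`P² = P`, `P* = P`) whose
range is invariant under `φ`, i.e. `(1−P) φ P = 0`.  Then
`tr(P ∘ (φφ* − φ*φ)) = ‖P φ (1−P)‖_HS²`; in particular this trace is a nonnegative real
number, and it vanishes if and only if `P φ (1−P) = 0`, i.e. iff `φ` preserves the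
orthogonal decomposition `E = range P ⊕ (range P)ᗮ`. -/
theorem trace_proj_selfCommutator_of_invariant
    {E : Type*} [NormedAddCommGroup E] [InnerProductSpace ℂ E] [FiniteDimensional ℂ E]
    (φ P : E →ₗ[ℂ] E) (hP2 : P * P = P) (hPadj : LinearMap.adjoint P = P)
    (hinv : (1 - P) * φ * P = 0) :
    LinearMap.trace ℂ E
        (P * (φ * LinearMap.adjoint φ - LinearMap.adjoint φ * φ))
      = (((LinearMap.trace ℂ E
            (LinearMap.adjoint (P * φ * (1 - P)) * (P * φ * (1 - P)))).re : ℝ) : ℂ)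
    ∧ 0 ≤ LinearMap.trace ℂ E
        (P * (φ * LinearMap.adjoint φ - LinearMap.adjoint φ * φ))
    ∧ (LinearMap.trace ℂ E
        (P * (φ * LinearMap.adjoint φ - LinearMap.adjoint φ * φ)) = 0
        ↔ P * φ * (1 - P) = 0) := by
  set ψ := LinearMap.adjoint φ with hψ
  set B := P * φ * (1 - P) with hB
  set t := LinearMap.trace ℂ E with ht
  -- invariance: P (φ P) = φ P
  have hf1 : P * (φ * P) = φ * P := by
    have h := hinv
    rw [sub_mul, one_mul, sub_mul, sub_eq_zero] at h
    rw [← mul_assoc]; exact h.symm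
  -- adjoint version: (P ψ) P = P ψ
  have hf2 : (P * ψ) * P = P * ψ := by
    have h := congrArg (star : (E →ₗ[ℂ] E) → (E →ₗ[ℂ] E)) hf1
    simp only [star_mul, LinearMap.star_eq_adjoint, hPadj, ← hψ] at h
    exact h
  have hPP : ∀ x : E →ₗ[ℂ] E, P * (P * x) = P * x := fun x => by
    rw [← mul_assoc, hP2]
  -- adjoint of B
  have hBadj : LinearMap.adjoint B = (1 - P) * (ψ * P) := by
    rw [hB, ← LinearMap.star_eq_adjoint]
    simp only [star_mul, star_sub, star_one, LinearMap.star_eq_adjoint]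
    rw [hPadj]
  -- expand B* B
  have e : LinearMap.adjoint B * B
      = ψ * (P * φ) - ψ * (P * (φ * P)) - P * (ψ * (P * φ)) + P * (ψ * (P * (φ * P))) := by
    rw [hBadj, hB]
    have expand : (1 - P) * (ψ * P) * (P * φ * (1 - P))
        = ψ * (P * (P * φ)) - ψ * (P * (P * (φ * P)))
          - P * (ψ * (P * (P * φ))) + P * (ψ * (P * (P * (φ * P)))) := by
      noncomm_ring
    rw [expand]
    simp only [hPP]
  have c1 : t (ψ * (P * φ)) = t (P * (φ * ψ)) := by
    rw [ht, LinearMap.trace_mul_comm, mul_assoc]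
  have c2 : t (ψ * (φ * P)) = t (P * (ψ * φ)) := by
    rw [ht, ← mul_assoc, LinearMap.trace_mul_comm]
  have c3 : t (P * (ψ * (P * φ))) = t (P * (ψ * φ)) := by
    have : P * (ψ * (P * φ)) = ((P * ψ) * P) * φ := by noncomm_ring
    rw [this, hf2, mul_assoc]
  have c4 : t (P * (ψ * (φ * P))) = t (P * (ψ * φ)) := by
    have : P * (ψ * (φ * P)) = (P * (ψ * φ)) * P := by noncomm_ring
    rw [this, ht, LinearMap.trace_mul_comm, ← ht, hPP]
  -- key identity
  have key : t (P * (φ * ψ - ψ * φ)) = t (LinearMap.adjoint B * B) := by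
    rw [e, mul_sub]
    simp only [map_sub, map_add]
    have c2' : t (ψ * (P * (φ * P))) = t (P * (ψ * φ)) := by rw [hf1, c2]
    have c4' : t (P * (ψ * (P * (φ * P)))) = t (P * (ψ * φ)) := by rw [hf1, c4]
    rw [c1, c2', c3, c4']
    ring
  have hT := trace_adjoint_mul_self_aux B
  rw [← ht] at hT
  set S : ℝ := ∑ i, ‖B (stdOrthonormalBasis ℂ E i)‖ ^ 2 with hS
  have hSnn : 0 ≤ S := Finset.sum_nonneg fun i _ => sq_nonneg _
  have hmain : t (P * (φ * ψ - ψ * φ)) = (S : ℂ) := key.trans hT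
  refine ⟨?_, ?_, ?_⟩
  · rw [hmain, hT, Complex.ofReal_re]
  · rw [hmain]
    exact_mod_cast hSnn
  · rw [hmain]
    rw [show ((S : ℂ) = 0) ↔ (S = 0) from Complex.ofReal_eq_zero]
    constructor
    · intro h0
      have hall : ∀ i, ‖B (stdOrthonormalBasis ℂ E i)‖ ^ 2 = 0 := by
        have := (Finset.sum_eq_zero_iff_of_nonneg (fun i _ => sq_nonneg _)).mp h0
        exact fun i => this i (Finset.mem_univ i)
      refine (stdOrthonormalBasis ℂ E).toBasis.ext fun i => ?_
      have := hall i
      rw [pow_eq_zero_iff (two_ne_zero), norm_eq_zero] at this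
      simpa using this
    · intro h0
      rw [hS]
      refine Finset.sum_eq_zero fun i _ => ?_
      rw [h0]
      simp
end

section
/- Let r ≥ 1, let α > 0 and 0 < β < 1/2 be real numbers, and let w be any r×r complex matrix. Then the Hermitian matrix I_r − (α·β / (1 + α·‖w‖_F²))·(w·wᴴ − wᴴ·w) is positive definite. (This is the pointwise matrix form of the claim that the eigenvalues of the endomorphism 𝔠_{αβ}(h) = (αβ/(1+α|φ|²_h))Λ[φ,φ*ʰ] are bounded in norm by 2β, so that for β < 1/2 the Hermitian operator Id_E − 𝔠_{αβ}(h) is strictly positive and the metric ĥ = h(Id_E − 𝔠_{αβ}(h)) appearing in the definition of balanced metrics is well defined.) -/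
open Matrix
open scoped ComplexOrder

/-!
Write `c = αβ / (1 + α‖w‖_F²)` and split
`1 - c • (w wᴴ - wᴴ w) = (1 - c • w wᴴ) + c • wᴴ w`. The second summand is positive
semidefinite. The first is positive definite because `⟪x, w wᴴ x⟫ = ‖wᴴ x‖² ≤ ‖w‖_F² ‖x‖²`
and `c ‖w‖_F² = β · α‖w‖_F² / (1 + α‖w‖_F²) < β < 1`.
-/

attribute [local instance] Matrix.frobeniusNormedAddCommGroup

namespace Matrix

theorem star_dotProduct_mul_conjTranspose_mulVec {m l R : Type*} [Fintype m] [Fintype l]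
    [CommSemiring R] [StarRing R] (A : Matrix m l R) (x : m → R) :
    star x ⬝ᵥ ((A * Aᴴ) *ᵥ x) = star (Aᴴ *ᵥ x) ⬝ᵥ (Aᴴ *ᵥ x) := by
  rw [← mulVec_mulVec, dotProduct_mulVec, star_mulVec, conjTranspose_conjTranspose]

variable {m n 𝕜 : Type*} [Fintype m] [Fintype n] [RCLike 𝕜]

theorem star_dotProduct_self_eq_norm_sq (x : n → 𝕜) :
    star x ⬝ᵥ x = (‖WithLp.toLp 2 x‖ ^ 2 : ℝ) := by
  rw [dotProduct_comm, ← EuclideanSpace.inner_toLp_toLp, inner_self_eq_norm_sq_to_K]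
  push_cast
  rfl

theorem frobenius_norm_mulVec_le (A : Matrix m n 𝕜) (x : n → 𝕜) :
    ‖WithLp.toLp 2 (A *ᵥ x)‖ ≤ ‖A‖ * ‖WithLp.toLp 2 x‖ := by
  simpa only [← frobenius_norm_replicateCol (ι := Unit), replicateCol_mulVec]
    using frobenius_norm_mul A (replicateCol Unit x)

theorem frobenius_norm_sq_eq_re_trace (A : Matrix m n 𝕜) :
    ‖A‖ ^ 2 = RCLike.re (Aᴴ * A).trace := by
  change ‖WithLp.toLp 2 fun i => WithLp.toLp 2 (A i)‖ ^ 2 = _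
  simp only [PiLp.norm_sq_eq_of_L2, trace, diag_apply, mul_apply, conjTranspose_apply, map_sum]
  rw [Finset.sum_comm]
  simp [RCLike.star_def, RCLike.conj_mul]

theorem posDef_one_sub_smul_mul_conjTranspose [DecidableEq m] (A : Matrix m n 𝕜) {c : ℝ}
    (hc : 0 ≤ c) (hcA : c * ‖A‖ ^ 2 < 1) : (1 - c • (A * Aᴴ)).PosDef := by
  refine .of_dotProduct_mulVec_pos
    (isHermitian_one.sub ((posSemidef_self_mul_conjTranspose A).smul hc).isHermitian)
    fun x hx => ?_
  have hform : star x ⬝ᵥ ((1 - c • (A * Aᴴ)) *ᵥ x)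
      = ((‖WithLp.toLp 2 x‖ ^ 2 - c * ‖WithLp.toLp 2 (Aᴴ *ᵥ x)‖ ^ 2 : ℝ) : 𝕜) := by
    rw [sub_mulVec, one_mulVec, smul_mulVec, dotProduct_sub, dotProduct_smul,
      star_dotProduct_mul_conjTranspose_mulVec, star_dotProduct_self_eq_norm_sq,
      star_dotProduct_self_eq_norm_sq]
    simp [RCLike.real_smul_eq_coe_mul]
  have hx : 0 < ‖WithLp.toLp 2 x‖ := by simpa using hx
  have hAx : ‖WithLp.toLp 2 (Aᴴ *ᵥ x)‖ ≤ ‖A‖ * ‖WithLp.toLp 2 x‖ := by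
    simpa using frobenius_norm_mulVec_le Aᴴ x
  rw [hform, RCLike.ofReal_pos, sub_pos]
  calc c * ‖WithLp.toLp 2 (Aᴴ *ᵥ x)‖ ^ 2 ≤ c * ‖A‖ ^ 2 * ‖WithLp.toLp 2 x‖ ^ 2 := by
        rw [mul_assoc, ← mul_pow]
        gcongr
    _ < ‖WithLp.toLp 2 x‖ ^ 2 := mul_lt_of_lt_one_left (by positivity) hcA

end Matrix

theorem id_sub_scaled_selfCommutator_posDef_general
    (r : ℕ) (α β : ℝ) (hα : 0 < α) (hβ : 0 < β) (hβ' : β < 1 / 2)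
    (w : Matrix (Fin r) (Fin r) ℂ) :
    ((1 : Matrix (Fin r) (Fin r) ℂ)
      - (α * β / (1 + α * ((wᴴ * w).trace.re)) : ℝ) • (w * wᴴ - wᴴ * w)).PosDef := by
  have ht : ‖w‖ ^ 2 = (wᴴ * w).trace.re := frobenius_norm_sq_eq_re_trace w
  set t := (wᴴ * w).trace.re
  set c := α * β / (1 + α * t)
  have hαt : 0 ≤ α * t := by rw [← ht]; positivity
  have hc : 0 ≤ c := by positivity
  have hcw : c * ‖w‖ ^ 2 < 1 := by
    rw [ht, div_mul_eq_mul_div, div_lt_one (by positivity)]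
    nlinarith
  rw [smul_sub, ← sub_add]
  exact (posDef_one_sub_smul_mul_conjTranspose w hc hcw).add_posSemidef
    ((posSemidef_conjTranspose_mul_self w).smul hc)

/-- For `r ≥ 1`, real parameters `α > 0` and `0 < β < 1/2`, and any `r × r` complex
matrix `w`, the Hermitian matrix `I_r − (αβ/(1 + α‖w‖_F²))·(w wᴴ − wᴴ w)` is positive
definite, where `‖w‖_F² = tr(wᴴ w)` is the squared Frobenius norm. -/
theorem id_sub_scaled_selfCommutator_posDef
    (r : ℕ) (hr : 1 ≤ r) (α β : ℝ) (hα : 0 < α) (hβ : 0 < β) (hβ' : β < 1 / 2)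
    (w : Matrix (Fin r) (Fin r) ℂ) :
    ((1 : Matrix (Fin r) (Fin r) ℂ)
      - (α * β / (1 + α * ((wᴴ * w).trace.re)) : ℝ) • (w * wᴴ - wᴴ * w)).PosDef :=
  id_sub_scaled_selfCommutator_posDef_general r α β hα hβ hβ' w
end
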